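/- With a₀₂ = -5/2 and a₀₃ = 3/2, the quartic polynomial kernel S_4 has approximation order 3: for every real t, Σ_{i∈ℤ} S_4(t - i) = 1, Σ_{i∈ℤ} (t - i)S_4(t - i) = 0, and Σ_{i∈ℤ} (t - i)²S_4(t - i) is constant in t. -/

import Mathlib

noncomputable def S4 (a2 a3 t : ℝ) : ℝ :=
  if |t| < 1 then
    (1 - |t|) * (1 + |t| + (1 + a2) * |t| ^ 2 + (1 + a2 + a3) * |t| ^ 3)
  else if |t| < 2 then
    (1 - |t|) * (2 - |t|) ^ 2 * (5 + 3 * a2 + 2 * a3 - (1 + a2 + a3) * |t|)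
  else 0

lemma S4_zero (a2 a3 t : ℝ) (h : 2 ≤ |t|) : S4 a2 a3 t = 0 := by
  unfold S4
  have h1 : ¬ |t| < 1 := by linarith
  have h2 : ¬ |t| < 2 := by linarith
  simp [h1, h2]

lemma S4_A (x : ℝ) (h0 : 0 ≤ x) (h1 : x ≤ 1) :
    S4 (-5/2) (3/2) x = (1 - x) * (1 + x - (3/2) * x ^ 2) := by
  have hx : |x| = x := abs_of_nonneg h0
  unfold S4
  rw [hx]
  rcases lt_or_eq_of_le h1 with h | h
  · simp only [if_pos h]; ring
  · subst h; norm_num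

lemma S4_B (x : ℝ) (h0 : 1 ≤ x) (h1 : x ≤ 2) :
    S4 (-5/2) (3/2) x = (1 - x) * (2 - x) ^ 2 * (1/2) := by
  have hx : |x| = x := abs_of_nonneg (by linarith)
  unfold S4
  rw [hx]
  have hn1 : ¬ x < 1 := by linarith
  rcases lt_or_eq_of_le h1 with h | h
  · simp only [if_neg hn1, if_pos h]; ring
  · subst h; norm_num

lemma S4_even (a2 a3 t : ℝ) : S4 a2 a3 (-t) = S4 a2 a3 t := by
  unfold S4; rw [abs_neg]

lemma tsum_reduce (w : ℝ → ℝ) (t : ℝ) :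
    ∑' i : ℤ, w (t - i) * S4 (-5/2) (3/2) (t - i) =
      w (Int.fract t + 1) * S4 (-5/2) (3/2) (Int.fract t + 1)
      + w (Int.fract t) * S4 (-5/2) (3/2) (Int.fract t)
      + w (Int.fract t - 1) * S4 (-5/2) (3/2) (Int.fract t - 1)
      + w (Int.fract t - 2) * S4 (-5/2) (3/2) (Int.fract t - 2) := by
  set n : ℤ := ⌊t⌋ with hn
  have hfl : (n : ℝ) ≤ t := Int.floor_le t
  have hfu : t < n + 1 := Int.lt_floor_add_one t
  have hsum := tsum_eq_sum (L := SummationFilter.unconditional ℤ) (f := fun i : ℤ => w (t - i) * S4 (-5/2) (3/2) (t - i))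
    (s := ({n - 1, n, n + 1, n + 2} : Finset ℤ)) (by
      intro i hi
      simp only [Finset.mem_insert, Finset.mem_singleton] at hi
      push_neg at hi
      obtain ⟨h1, h2, h3, h4⟩ := hi
      have : i ≤ n - 2 ∨ n + 3 ≤ i := by omega
      have habs : 2 ≤ |t - i| := by
        rcases this with h | h
        · have : (i : ℝ) ≤ (n : ℝ) - 2 := by exact_mod_cast Int.cast_le.mpr h |>.trans_eq (by push_cast; ring)
          rw [abs_of_nonneg (by linarith)]; linarith
        · have : (n : ℝ) + 3 ≤ (i : ℝ) := by exact_mod_cast h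
          rw [abs_of_nonpos (by linarith)]; linarith
      show w (t - i) * S4 (-5/2) (3/2) (t - i) = 0
      rw [S4_zero _ _ _ habs, mul_zero])
  rw [hsum]
  rw [Finset.sum_insert (by simp only [Finset.mem_insert, Finset.mem_singleton, not_or]; omega),
    Finset.sum_insert (by simp only [Finset.mem_insert, Finset.mem_singleton, not_or]; omega),
    Finset.sum_insert (by simp only [Finset.mem_singleton]; omega), Finset.sum_singleton]
  have hx : Int.fract t = t - (n : ℝ) := by rw [Int.fract, hn]
  rw [hx]
  push_cast
  ring_nf

lemma four_vals (x : ℝ) (h0 : 0 ≤ x) (h1 : x < 1) :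
    S4 (-5/2) (3/2) (x + 1) = (1 - (x+1)) * (2 - (x+1)) ^ 2 * (1/2) ∧
    S4 (-5/2) (3/2) x = (1 - x) * (1 + x - (3/2) * x ^ 2) ∧
    S4 (-5/2) (3/2) (x - 1) = (1 - (1-x)) * (1 + (1-x) - (3/2) * (1-x) ^ 2) ∧
    S4 (-5/2) (3/2) (x - 2) = (1 - (2-x)) * (2 - (2-x)) ^ 2 * (1/2) := by
  refine ⟨S4_B _ (by linarith) (by linarith), S4_A _ h0 h1.le, ?_, ?_⟩
  · rw [show x - 1 = -(1 - x) by ring, S4_even, S4_A _ (by linarith) (by linarith)]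
  · rw [show x - 2 = -(2 - x) by ring, S4_even, S4_B _ (by linarith) (by linarith)]

theorem S4_approx_order_three :
    (∀ t : ℝ, ∑' i : ℤ, S4 (-5/2) (3/2) (t - i) = 1) ∧
    (∀ t : ℝ, ∑' i : ℤ, (t - i) * S4 (-5/2) (3/2) (t - i) = 0) ∧
    (∃ C : ℝ, ∀ t : ℝ, ∑' i : ℤ, (t - i) ^ 2 * S4 (-5/2) (3/2) (t - i) = C) := by
  refine ⟨?_, ?_, 0, ?_⟩
  · intro t
    have h := tsum_reduce (fun _ => 1) t
    simp only [one_mul] at h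
    rw [h]
    obtain ⟨e1, e2, e3, e4⟩ := four_vals (Int.fract t) (Int.fract_nonneg t) (Int.fract_lt_one t)
    rw [e1, e2, e3, e4]; ring
  · intro t
    rw [tsum_reduce (fun u => u) t]
    obtain ⟨e1, e2, e3, e4⟩ := four_vals (Int.fract t) (Int.fract_nonneg t) (Int.fract_lt_one t)
    rw [e1, e2, e3, e4]; ring
  · intro t
    rw [tsum_reduce (fun u => u ^ 2) t]
    obtain ⟨e1, e2, e3, e4⟩ := four_vals (Int.fract t) (Int.fract_nonneg t) (Int.fract_lt_one t)
    rw [e1, e2, e3, e4]; ring
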